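/- Fix n ≥ 1. Let A_1 be the 2n×2n real matrix with entries (A_1)_{2k−1,2k} = (A_1)_{2k,2k−1} = 1 for 1 ≤ k ≤ n, (A_1)_{2k,2k+1} = (A_1)_{2k+1,2k} = −1 for 1 ≤ k ≤ n−1, and 0 elsewhere; let D = diag(1,−1,1,…,−1) of size 2n, and for k ≥ 1 let A_{k+1} = A_1 ⊗ I_{(2n)^k} + D ⊗ A_k. Then for every k ≥ 1, A_{k+1}² = A_1² ⊗ I_{(2n)^k} + I_{2n} ⊗ A_k². -/

import Mathlib

open Kronecker Matrix

/-- A matrix `M` has real eigenvalue `μ` if `M x = μ x` for some nonzero vector `x`. -/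
def HasEig {I : Type*} [Fintype I] (M : Matrix I I ℝ) (μ : ℝ) : Prop :=
  ∃ x : I → ℝ, x ≠ 0 ∧ M.mulVec x = μ • x

/-- The signed adjacency matrix `A_1` of the path `P_{2n}`: in 1-indexed terms,
`(A_1)_{2k−1,2k} = (A_1)_{2k,2k−1} = 1` for `1 ≤ k ≤ n` and
`(A_1)_{2k,2k+1} = (A_1)_{2k+1,2k} = −1` for `1 ≤ k ≤ n−1`, zero elsewhere.
On the 0-indexed `Fin (2n)`, the entry at `(i, i+1)` is `1` when `i` is even and
`−1` when `i` is odd. -/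
def signedPath (n : ℕ) : Matrix (Fin (2 * n)) (Fin (2 * n)) ℝ :=
  Matrix.of fun i j =>
    if (i : ℕ) + 1 = (j : ℕ) then (if (i : ℕ) % 2 = 0 then 1 else -1)
    else if (j : ℕ) + 1 = (i : ℕ) then (if (j : ℕ) % 2 = 0 then 1 else -1)
    else 0

/-- `D = diag(1, −1, 1, …, −1)` of size `2n`. -/
def altDiag (n : ℕ) : Matrix (Fin (2 * n)) (Fin (2 * n)) ℝ :=
  Matrix.diagonal fun i => if (i : ℕ) % 2 = 0 then 1 else -1

/-- The signed adjacency matrices of `P_{2n}^k`: `APn n 0 = A_1` and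
`APn n (k+1) = A_1 ⊗ I_{(2n)^(k+1)} + D ⊗ APn n k` (Kronecker products), so
`APn n k` is the matrix `A_{k+1}` of the paper; it is indexed by
`Fin (k+1) → Fin (2n)`, a type of cardinality `(2n)^(k+1)`. -/
noncomputable def APn (n : ℕ) :
    (k : ℕ) → Matrix (Fin (k + 1) → Fin (2 * n)) (Fin (k + 1) → Fin (2 * n)) ℝ
  | 0 => Matrix.reindex (Equiv.funUnique (Fin 1) (Fin (2 * n))).symm
      (Equiv.funUnique (Fin 1) (Fin (2 * n))).symm (signedPath n)
  | (k + 1) =>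
      Matrix.reindex (Fin.consEquiv fun _ : Fin (k + 2) => Fin (2 * n))
        (Fin.consEquiv fun _ : Fin (k + 2) => Fin (2 * n))
        (signedPath n ⊗ₖ
            (1 : Matrix (Fin (k + 1) → Fin (2 * n)) (Fin (k + 1) → Fin (2 * n)) ℝ)
          + altDiag n ⊗ₖ APn n k)

/-! Since `D² = I` and `D` anticommutes with `A_1`, the two summands `A_1 ⊗ I` and `D ⊗ A_k` of
`A_{k+1}` anticommute, so the cross terms of its square cancel. -/

theorem kronecker_one_add_kronecker_sq {R m n : Type*} [CommRing R] [Fintype m] [DecidableEq m]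
    [Fintype n] [DecidableEq n] (A D : Matrix m m R) (B : Matrix n n R) (hD : D * D = 1)
    (hAD : A * D + D * A = 0) :
    (A ⊗ₖ (1 : Matrix n n R) + D ⊗ₖ B) ^ 2 = (A ^ 2) ⊗ₖ (1 : Matrix n n R) + 1 ⊗ₖ (B ^ 2) := by
  have hcross : (A * D) ⊗ₖ B + (D * A) ⊗ₖ B = 0 := by
    rw [← add_kronecker, hAD, zero_kronecker]
  calc (A ⊗ₖ (1 : Matrix n n R) + D ⊗ₖ B) ^ 2
      = (A * A) ⊗ₖ (1 : Matrix n n R) + ((A * D) ⊗ₖ B + (D * A) ⊗ₖ B) + (D * D) ⊗ₖ (B * B) := by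
        simp only [sq, add_mul, mul_add, ← mul_kronecker_mul, Matrix.one_mul, Matrix.mul_one]
        abel
    _ = (A ^ 2) ⊗ₖ (1 : Matrix n n R) + 1 ⊗ₖ (B ^ 2) := by
        rw [hcross, add_zero, hD, sq, sq]

theorem altDiag_mul_self (n : ℕ) : altDiag n * altDiag n = 1 := by
  ext i j
  simp only [altDiag, diagonal_mul_diagonal, diagonal_apply, one_apply]
  split_ifs <;> norm_num

/-- `A_1` only links indices of opposite parity, where the signs of `D` differ. -/
theorem signedPath_mul_altDiag_add (n : ℕ) :
    signedPath n * altDiag n + altDiag n * signedPath n = 0 := by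
  ext i j
  simp only [altDiag, signedPath, Matrix.add_apply, mul_diagonal, diagonal_mul, of_apply,
    Matrix.zero_apply]
  split_ifs <;> first | omega | norm_num

theorem APn_sq_general (n : ℕ) (k : ℕ) :
    (APn n (k + 1)) ^ 2 =
      Matrix.reindex (Fin.consEquiv fun _ : Fin (k + 2) => Fin (2 * n))
        (Fin.consEquiv fun _ : Fin (k + 2) => Fin (2 * n))
        ((((signedPath n) ^ 2) ⊗ₖ
            (1 : Matrix (Fin (k + 1) → Fin (2 * n)) (Fin (k + 1) → Fin (2 * n)) ℝ))
          + ((1 : Matrix (Fin (2 * n)) (Fin (2 * n)) ℝ) ⊗ₖ ((APn n k) ^ 2))) := by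
  rw [APn, ← coe_reindexAlgEquiv ℝ ℝ, ← map_pow, coe_reindexAlgEquiv,
    kronecker_one_add_kronecker_sq _ _ _ (altDiag_mul_self n) (signedPath_mul_altDiag_add n)]

/-- Fix `n ≥ 1`. For every `k ≥ 1`, `A_{k+1}² = A_1² ⊗ I_{(2n)^k} + I_{2n} ⊗ A_k²`
(with `APn n k` the paper's `A_{k+1}`, this is stated for all `k : ℕ`, the identity
being transported along the same index bijection used to define `APn n (k+1)`). -/
theorem APn_sq (n : ℕ) (hn : 1 ≤ n) (k : ℕ) :
    (APn n (k + 1)) ^ 2 =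
      Matrix.reindex (Fin.consEquiv fun _ : Fin (k + 2) => Fin (2 * n))
        (Fin.consEquiv fun _ : Fin (k + 2) => Fin (2 * n))
        ((((signedPath n) ^ 2) ⊗ₖ
            (1 : Matrix (Fin (k + 1) → Fin (2 * n)) (Fin (k + 1) → Fin (2 * n)) ℝ))
          + ((1 : Matrix (Fin (2 * n)) (Fin (2 * n)) ℝ) ⊗ₖ ((APn n k) ^ 2))) :=
  APn_sq_general n k
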